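/- Let Λ > 0, μ > 0 and d ≥ 0 be real numbers and let N : ℝ → ℝ be differentiable on [0, ∞) and satisfy Λ − (μ + d)·N(t) ≤ N'(t) ≤ Λ − μ·N(t) for all t ≥ 0. Then for every t ≥ 0 one has min(N(0), Λ/(μ + d)) ≤ N(t) ≤ max(N(0), Λ/μ). -/

import Mathlib

/-!
Integrating factor: if `N' ≤ c (K - N)` with `c ≥ 0`, then `(N t - K) e^{ct}` is antitone, so
`N t - K ≤ (N 0 - K) e^{-ct}` and `N` can never rise above `max (N 0) K`. Applied to `-N`, the
same comparison bounds `N` from below. The total population satisfies the upper inequality with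
`c = μ`, `K = Λ / μ`, and the lower one with `c = μ + d`, `K = Λ / (μ + d)`.
-/

open Real Set

section Relaxation

variable {N N' : ℝ → ℝ} {a c K : ℝ}

lemma antitoneOn_sub_mul_exp_of_hasDerivAt_le
    (hderiv : ∀ t, a ≤ t → HasDerivAt N (N' t) t)
    (hupp : ∀ t, a ≤ t → N' t ≤ c * (K - N t)) :
    AntitoneOn (fun t => (N t - K) * exp (c * t)) (Ici a) := by
  have hasDeriv : ∀ t, a ≤ t →
      HasDerivAt (fun t => (N t - K) * exp (c * t)) ((N' t - c * (K - N t)) * exp (c * t)) t := by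
    intro t ht
    have hexp : HasDerivAt (fun t => exp (c * t)) (exp (c * t) * c) t := by
      simpa using ((hasDerivAt_id t).const_mul c).exp
    exact (((hderiv t ht).sub_const K).mul hexp).congr_deriv (by ring)
  refine antitoneOn_of_hasDerivWithinAt_nonpos (convex_Ici a)
    (f' := fun t => (N' t - c * (K - N t)) * exp (c * t))
    (fun t ht => (hasDeriv t ht).continuousAt.continuousWithinAt) (fun t ht => ?_) (fun t ht => ?_)
  · rw [interior_Ici] at ht
    exact (hasDeriv t ht.le).hasDerivWithinAt
  · rw [interior_Ici] at ht
    exact mul_nonpos_of_nonpos_of_nonneg (sub_nonpos.2 (hupp t ht.le)) (exp_pos _).le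

lemma le_max_of_hasDerivAt_le_mul_sub (hc : 0 ≤ c)
    (hderiv : ∀ t, a ≤ t → HasDerivAt N (N' t) t)
    (hupp : ∀ t, a ≤ t → N' t ≤ c * (K - N t)) :
    ∀ t, a ≤ t → N t ≤ max (N a) K := by
  intro t ht
  rcases le_or_gt (N t) K with hle | hgt
  · exact le_max_of_le_right hle
  have hdecay := antitoneOn_sub_mul_exp_of_hasDerivAt_le hderiv hupp self_mem_Ici ht ht
  have hfactor : exp (c * a) ≤ exp (c * t) := exp_le_exp.2 (mul_le_mul_of_nonneg_left ht hc)
  have : (N t - K) * exp (c * a) ≤ (N a - K) * exp (c * a) :=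
    calc (N t - K) * exp (c * a) ≤ (N t - K) * exp (c * t) :=
          mul_le_mul_of_nonneg_left hfactor (sub_nonneg.2 hgt.le)
      _ ≤ (N a - K) * exp (c * a) := hdecay
  exact le_max_of_le_left (by linarith [le_of_mul_le_mul_right this (exp_pos _)])

lemma min_le_of_mul_sub_le_hasDerivAt (hc : 0 ≤ c)
    (hderiv : ∀ t, a ≤ t → HasDerivAt N (N' t) t)
    (hlow : ∀ t, a ≤ t → c * (K - N t) ≤ N' t) :
    ∀ t, a ≤ t → min (N a) K ≤ N t := by
  intro t ht
  have := le_max_of_hasDerivAt_le_mul_sub (N := fun t => -N t) (N' := fun t => -N' t) (K := -K) hc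
    (fun t ht => (hderiv t ht).neg) (fun t ht => by linarith [hlow t ht]) t ht
  rw [max_neg_neg] at this
  exact neg_le_neg_iff.1 this

end Relaxation

theorem sica_uniform_bounds_general
    (Λ μ d : ℝ) (hμ : 0 < μ) (hd : 0 ≤ d)
    (N N' : ℝ → ℝ)
    (hderiv : ∀ t, 0 ≤ t → HasDerivAt N (N' t) t)
    (hlow : ∀ t, 0 ≤ t → Λ - (μ + d) * N t ≤ N' t)
    (hupp : ∀ t, 0 ≤ t → N' t ≤ Λ - μ * N t) :
    ∀ t, 0 ≤ t →
      min (N 0) (Λ / (μ + d)) ≤ N t ∧ N t ≤ max (N 0) (Λ / μ) := by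
  have hμd : 0 < μ + d := by linarith
  intro t ht
  constructor
  · refine min_le_of_mul_sub_le_hasDerivAt hμd.le hderiv (fun s hs => ?_) t ht
    rw [mul_sub, mul_div_cancel₀ Λ hμd.ne']
    exact hlow s hs
  · refine le_max_of_hasDerivAt_le_mul_sub hμ.le hderiv (fun s hs => ?_) t ht
    rw [mul_sub, mul_div_cancel₀ Λ hμ.ne']
    exact hupp s hs

/-- Uniform two-sided pathwise bound underlying Lemma 3.2: if `N` is differentiable
on `[0, ∞)` with derivative `N'` satisfying
`Λ - (μ + d) * N t ≤ N' t ≤ Λ - μ * N t` for all `t ≥ 0`, where `Λ > 0`, `μ > 0`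
and `d ≥ 0`, then for every `t ≥ 0`,
`min (N 0) (Λ/(μ+d)) ≤ N t ≤ max (N 0) (Λ/μ)`. -/
theorem sica_uniform_bounds
    (Λ μ d : ℝ) (hΛ : 0 < Λ) (hμ : 0 < μ) (hd : 0 ≤ d)
    (N N' : ℝ → ℝ)
    (hderiv : ∀ t, 0 ≤ t → HasDerivAt N (N' t) t)
    (hlow : ∀ t, 0 ≤ t → Λ - (μ + d) * N t ≤ N' t)
    (hupp : ∀ t, 0 ≤ t → N' t ≤ Λ - μ * N t) :
    ∀ t, 0 ≤ t →
      min (N 0) (Λ / (μ + d)) ≤ N t ∧ N t ≤ max (N 0) (Λ / μ) :=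
  sica_uniform_bounds_general Λ μ d hμ hd N N' hderiv hlow hupp
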